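/- Let Σ_x ∈ ℝ^{d_x×d_x} be symmetric positive definite, V ∈ ℝ^{d_y×d_x}, and D ≥ 2 an integer. When Σ_ε = I_{d_y}, the SGD sharpness formula T = (D−1)·(Tr S)^{(D−2)/D}·(Tr Σ_ε · Tr Σ_x)^{1/D}·Tr[Σ_ε^{−1} L S Lᵀ] + d_y·(Tr S)^{2(D−1)/D}·(Tr Σ_x)^{1/D}/(Tr Σ_ε)^{(D−1)/D}, evaluated with V' = Σ_ε^{1/2} V Σ_x^{1/2} = V Σ_x^{1/2} and any singular value decomposition V' = L S Rᵀ, equals the minimal sharpness D·(‖V·Σ_x^{1/2}‖_*)^{2(D−1)/D}·(d_y·Tr Σ_x)^{1/D}. -/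

import Mathlib

/-!
With `Σ_ε = I` both traces in the formula collapse to `Tr S`: `Tr (L S Lᵀ) = Tr S` by cycling
`Lᵀ L = I`, and `‖V'‖_* = Tr S` because `R S Rᵀ` is positive semidefinite with square
`V'ᵀ V' = R S² Rᵀ`, hence is the square root whose trace defines the nuclear norm. What remains
is the scalar identity `(D-1) t^{(D-2)/D} t + t^{2(D-1)/D} = D t^{2(D-1)/D}` once
`d_y / d_y^{(D-1)/D}` is recognised as `d_y^{1/D}`.
-/

open Matrix

/-- The positive semidefinite square root of a positive semidefinite matrix, as
`Matrix.PosSemidef.sqrt` was defined in the older Mathlib. -/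
noncomputable def posSemidefSqrt {n : Type*} [Fintype n] [DecidableEq n]
    {A : Matrix n n ℝ} (hA : A.PosSemidef) : Matrix n n ℝ :=
  hA.1.eigenvectorUnitary.1 * diagonal ((↑) ∘ (√·) ∘ hA.1.eigenvalues) *
    (star hA.1.eigenvectorUnitary : Matrix n n ℝ)

/-- The nuclear norm of a real matrix: the sum of its singular values,
i.e. `Tr((MᴴM)^{1/2})`. -/
noncomputable def nuclearNorm {m n : ℕ} (M : Matrix (Fin m) (Fin n) ℝ) : ℝ :=
  (posSemidefSqrt (Matrix.posSemidef_conjTranspose_mul_self M)).trace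

open scoped MatrixOrder in
theorem posSemidefSqrt_eq_cfcSqrt {n : Type*} [Fintype n] [DecidableEq n]
    {A : Matrix n n ℝ} (hA : A.PosSemidef) : posSemidefSqrt hA = CFC.sqrt A := by
  rw [CFC.sqrt_eq_cfc, cfc_nnreal_eq_real _ A, hA.1.cfc_eq]
  simp only [IsHermitian.cfc, Unitary.conjStarAlgAut_apply, posSemidefSqrt]
  congr 2
  ext i j
  rw [diagonal_apply, diagonal_apply]
  split_ifs <;> simp [max_eq_left (hA.eigenvalues_nonneg _)]

open scoped MatrixOrder in
theorem posSemidefSqrt_eq_of_mul_self_eq {n : Type*} [Fintype n] [DecidableEq n]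
    {A B : Matrix n n ℝ} (hA : A.PosSemidef) (hB : B.PosSemidef) (h : B * B = A) :
    posSemidefSqrt hA = B := by
  rw [posSemidefSqrt_eq_cfcSqrt]
  exact CFC.sqrt_unique h hB.nonneg

section Orthonormal

variable {m n k : Type*} [Fintype m] [Fintype n] [Fintype k] [DecidableEq k]
  {L : Matrix m k ℝ} {R : Matrix n k ℝ} {S : Matrix k k ℝ}

theorem trace_mul_mul_transpose_of_orthonormal (hL : Lᵀ * L = 1) (S : Matrix k k ℝ) :
    (L * S * Lᵀ).trace = S.trace := by
  rw [trace_mul_cycle, hL, one_mul]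

theorem transpose_mul_self_of_svd (hS : Sᵀ = S) (hL : Lᵀ * L = 1) (hR : Rᵀ * R = 1) :
    (L * S * Rᵀ)ᵀ * (L * S * Rᵀ) = R * S * Rᵀ * (R * S * Rᵀ) := by
  calc (L * S * Rᵀ)ᵀ * (L * S * Rᵀ) = R * Sᵀ * (Lᵀ * L) * S * Rᵀ := by
        simp only [transpose_mul, transpose_transpose, Matrix.mul_assoc]
    _ = R * S * (Rᵀ * R) * S * Rᵀ := by rw [hS, hL, hR]
    _ = R * S * Rᵀ * (R * S * Rᵀ) := by simp only [Matrix.mul_assoc]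

end Orthonormal

theorem nuclearNorm_eq_trace_of_svd {m n k : ℕ} {M : Matrix (Fin m) (Fin n) ℝ}
    {L : Matrix (Fin m) (Fin k) ℝ} {R : Matrix (Fin n) (Fin k) ℝ} {S : Matrix (Fin k) (Fin k) ℝ}
    (hM : M = L * S * Rᵀ) (hS : S.PosSemidef) (hL : Lᵀ * L = 1) (hR : Rᵀ * R = 1) :
    nuclearNorm M = S.trace := by
  have hRSR : (R * S * Rᵀ).PosSemidef := by
    simpa only [conjTranspose_eq_transpose_of_trivial] using hS.mul_mul_conjTranspose_same R
  have hsq : R * S * Rᵀ * (R * S * Rᵀ) = Mᴴ * M := by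
    rw [hM, conjTranspose_eq_transpose_of_trivial,
      transpose_mul_self_of_svd (by simpa using hS.isHermitian.eq) hL hR]
  rw [nuclearNorm, posSemidefSqrt_eq_of_mul_self_eq _ hRSR hsq,
    trace_mul_mul_transpose_of_orthonormal hR]

theorem sgd_sharpness_formula_eq_of_isotropic {d n t c : ℝ} (hd : 1 < d)
    (hn : 0 ≤ n) (ht : 0 ≤ t) (hc : 0 ≤ c) :
    (d - 1) * t ^ ((d - 2) / d) * (n * c) ^ (1 / d) * t
        + n * t ^ (2 * (d - 1) / d) * c ^ (1 / d) / n ^ ((d - 1) / d)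
      = d * t ^ (2 * (d - 1) / d) * (n * c) ^ (1 / d) := by
  have hd0 : d ≠ 0 := by positivity
  have ht_pow : t ^ ((d - 2) / d) * t = t ^ (2 * (d - 1) / d) := by
    have hexp : (d - 2) / d + 1 = 2 * (d - 1) / d := by field_simp; ring
    rw [← hexp, Real.rpow_add' ht (by rw [hexp]; exact (div_pos (by linarith) (by linarith)).ne'),
      Real.rpow_one]
  have hn_pow : n / n ^ ((d - 1) / d) = n ^ (1 / d) := by
    have hexp : 1 - (d - 1) / d = 1 / d := by field_simp; ring
    rw [← hexp, Real.rpow_sub' hn (by rw [hexp]; positivity), Real.rpow_one]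
  rw [Real.mul_rpow hn hc]
  linear_combination (d - 1) * n ^ (1 / d) * c ^ (1 / d) * ht_pow
    + t ^ (2 * (d - 1) / d) * c ^ (1 / d) * hn_pow

/-- Corollary 2 ('if' direction): under isotropic label noise `Σ_ε = I`, the SGD
sharpness formula
`(D−1)·(Tr S)^{(D−2)/D}·(Tr Σ_ε · Tr Σ_x)^{1/D}·Tr[Σ_ε^{−1} L S Lᵀ]
  + d_y·(Tr S)^{2(D−1)/D}·(Tr Σ_x)^{1/D}/(Tr Σ_ε)^{(D−1)/D}`,
evaluated with `V' = V Σ_x^{1/2} = L S Rᵀ` an SVD, equals the minimal sharpness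
`D·‖V Σ_x^{1/2}‖_*^{2(D−1)/D}·(d_y · Tr Σ_x)^{1/D}`. -/
theorem sgd_sharpness_isotropic_eq_min {dx dy dd : ℕ} (D : ℕ) (hD : 2 ≤ D)
    (Sx : Matrix (Fin dx) (Fin dx) ℝ) (hSx : Sx.PosDef)
    (V : Matrix (Fin dy) (Fin dx) ℝ)
    (L : Matrix (Fin dy) (Fin dd) ℝ) (R : Matrix (Fin dx) (Fin dd) ℝ)
    (S : Matrix (Fin dd) (Fin dd) ℝ)
    (hSdiag : ∀ i j, i ≠ j → S i j = 0) (hSnonneg : ∀ i, 0 ≤ S i i)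
    (hSVD : V * posSemidefSqrt hSx.posSemidef = L * S * Rᵀ)
    (hL : Lᵀ * L = 1) (hR : Rᵀ * R = 1) :
    ((D : ℝ) - 1) * S.trace ^ (((D : ℝ) - 2) / D)
        * ((1 : Matrix (Fin dy) (Fin dy) ℝ).trace * Sx.trace) ^ ((1 : ℝ) / D)
        * ((1 : Matrix (Fin dy) (Fin dy) ℝ)⁻¹ * (L * S * Lᵀ)).trace
      + (dy : ℝ) * S.trace ^ (2 * ((D : ℝ) - 1) / D) * Sx.trace ^ ((1 : ℝ) / D)
        / ((1 : Matrix (Fin dy) (Fin dy) ℝ).trace) ^ (((D : ℝ) - 1) / D)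
    = (D : ℝ) * nuclearNorm (V * posSemidefSqrt hSx.posSemidef) ^ (2 * ((D : ℝ) - 1) / D)
        * ((dy : ℝ) * Sx.trace) ^ ((1 : ℝ) / D) := by
  have hS : S.PosSemidef := by
    rw [← IsDiag.diagonal_diag hSdiag]
    exact posSemidef_diagonal_iff.mpr hSnonneg
  rw [nuclearNorm_eq_trace_of_svd hSVD hS hL hR, inv_one, one_mul,
    trace_mul_mul_transpose_of_orthonormal hL, trace_one, Fintype.card_fin]
  have hD' : (1 : ℝ) < D := by exact_mod_cast hD
  exact sgd_sharpness_formula_eq_of_isotropic hD' dy.cast_nonneg hS.trace_nonneg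
    hSx.posSemidef.trace_nonneg
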